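/- arXiv:1702.04502 — 3 statements merged into one kernel-verified Lean document; each statement's English description precedes it below -/
import Mathlib

section
/- The B-spline basis functions of degree p associated with the knot vector k 0, …, k (n+p) form a partition of unity on the interior knot span: for every s ∈ ℝ with k p ≤ s < k n, one has ∑_{i=0}^{n-1} B^{(i,p)}(s) = 1. -/
/-- Interpolation factor τ(i,q,s) in the Cox–de Boor recursion. -/
noncomputable def coxTau (k : ℕ → ℝ) (i q : ℕ) (s : ℝ) : ℝ :=
  if k (i + q) ≠ k i then (s - k i) / (k (i + q) - k i) else 0

/-- Interpolation factor σ(i,q,s) in the Cox–de Boor recursion. -/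
noncomputable def coxSigma (k : ℕ → ℝ) (i q : ℕ) (s : ℝ) : ℝ :=
  if k (i + q + 1) ≠ k (i + 1) then (k (i + q + 1) - s) / (k (i + q + 1) - k (i + 1)) else 0

/-- The B-spline basis function `Bspline k p i` of degree `p` with index `i`
associated with the knot vector `k`, defined by the Cox–de Boor recursion. -/
noncomputable def Bspline (k : ℕ → ℝ) : ℕ → ℕ → ℝ → ℝ
  | 0, i, s => if k i ≤ s ∧ s < k (i + 1) then 1 else 0
  | q + 1, i, s =>
      coxTau k i (q + 1) s * Bspline k q i s +
      coxSigma k i (q + 1) s * Bspline k q (i + 1) s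


/-! By the Cox–de Boor recursion, a sum of consecutive degree-`(q+1)` B-splines regroups into a
sum of degree-`q` B-splines `B^{(i+1,q)}`, each weighted by `τ(i+1,q+1) + σ(i,q+1) = 1` (or vanishing
identically when its knot span is degenerate), plus two boundary terms that vanish on `[k p, k n)`.
Descending to degree `0` leaves the indicators of consecutive knot intervals, which tile
`[k 0, k (n+p))`. -/

open Finset

section Bspline

variable {k : ℕ → ℝ}

lemma Bspline_zero_eq_indicator (i : ℕ) (s : ℝ) :
    Bspline k 0 i s = (Set.Ico (k i) (k (i + 1))).indicator 1 s := by
  simp [Bspline, Set.indicator, Set.mem_Ico]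

lemma sum_range_Bspline_zero (hk : Monotone k) (N : ℕ) (s : ℝ) :
    ∑ i ∈ range N, Bspline k 0 i s = (Set.Ico (k 0) (k N)).indicator 1 s := by
  induction N with
  | zero => simp
  | succ N ih =>
    rw [sum_range_succ, ih, Bspline_zero_eq_indicator,
      ← Set.Ico_union_Ico_eq_Ico (hk N.zero_le) (hk N.le_succ),
      Set.indicator_union_of_disjoint Set.Ico_disjoint_Ico_same]

lemma Bspline_eq_zero_of_notMem_Ico (hk : Monotone k) (q i : ℕ) {s : ℝ}
    (hs : s ∉ Set.Ico (k i) (k (i + q + 1))) : Bspline k q i s = 0 := by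
  induction q generalizing i with
  | zero => simpa [Bspline_zero_eq_indicator] using hs
  | succ q ih =>
    have h₀ : Bspline k q i s = 0 :=
      ih i fun h => hs (Set.Ico_subset_Ico le_rfl (hk (by omega)) h)
    have h₁ : Bspline k q (i + 1) s = 0 :=
      ih (i + 1) fun h => hs (Set.Ico_subset_Ico (hk i.le_succ) (le_of_eq (by congr 1; omega)) h)
    simp [Bspline, h₀, h₁]

lemma coxTau_succ_add_coxSigma (i q : ℕ) (s : ℝ) (h : k (i + 1 + q) ≠ k (i + 1)) :
    coxTau k (i + 1) q s + coxSigma k i q s = 1 := by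
  rw [coxTau, coxSigma, if_pos h, show i + q + 1 = i + 1 + q by omega, if_pos h, ← add_div,
    div_eq_one_iff_eq (sub_ne_zero.2 h)]
  ring

lemma coxTau_succ_add_coxSigma_mul_Bspline (hk : Monotone k) (i q : ℕ) (s : ℝ) :
    (coxTau k (i + 1) (q + 1) s + coxSigma k i (q + 1) s) * Bspline k q (i + 1) s =
      Bspline k q (i + 1) s := by
  by_cases h : k (i + 1 + (q + 1)) = k (i + 1)
  · have hB : Bspline k q (i + 1) s = 0 := by
      refine Bspline_eq_zero_of_notMem_Ico hk q (i + 1) ?_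
      rw [show i + 1 + q + 1 = i + 1 + (q + 1) by omega, h, Set.Ico_self]
      exact Set.notMem_empty s
    rw [hB, mul_zero]
  · rw [coxTau_succ_add_coxSigma i (q + 1) s h, one_mul]

lemma sum_range_Bspline_succ (hk : Monotone k) (q m : ℕ) {s : ℝ}
    (h₀ : Bspline k q 0 s = 0) (hm : Bspline k q m s = 0) :
    ∑ i ∈ range m, Bspline k (q + 1) i s = ∑ i ∈ range (m + 1), Bspline k q i s := by
  have hτ : ∑ i ∈ range m, coxTau k i (q + 1) s * Bspline k q i s =
      ∑ i ∈ range m, coxTau k (i + 1) (q + 1) s * Bspline k q (i + 1) s := by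
    have h := (sum_range_succ (fun i => coxTau k i (q + 1) s * Bspline k q i s) m).symm.trans
      (sum_range_succ' (fun i => coxTau k i (q + 1) s * Bspline k q i s) m)
    simpa [h₀, hm] using h
  calc ∑ i ∈ range m, Bspline k (q + 1) i s
      = ∑ i ∈ range m, (coxTau k (i + 1) (q + 1) s + coxSigma k i (q + 1) s) *
          Bspline k q (i + 1) s := by
        simp only [Bspline, sum_add_distrib, hτ, add_mul]
    _ = ∑ i ∈ range (m + 1), Bspline k q i s := by
        simp only [coxTau_succ_add_coxSigma_mul_Bspline hk, sum_range_succ', h₀, add_zero]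

lemma sum_range_Bspline_eq_one (hk : Monotone k) {n p : ℕ} {s : ℝ} (h₁ : k p ≤ s) (h₂ : s < k n)
    (q : ℕ) (hq : q ≤ p) : ∑ i ∈ range (n + (p - q)), Bspline k q i s = 1 := by
  induction q with
  | zero =>
    rw [sum_range_Bspline_zero hk, Nat.sub_zero, Set.indicator_of_mem, Pi.one_apply]
    exact ⟨(hk p.zero_le).trans h₁, h₂.trans_le (hk (n.le_add_right p))⟩
  | succ q ih =>
    rw [sum_range_Bspline_succ hk q _ (Bspline_eq_zero_of_notMem_Ico hk q 0 ?_)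
      (Bspline_eq_zero_of_notMem_Ico hk q _ ?_), show n + (p - (q + 1)) + 1 = n + (p - q) by omega,
      ih (by omega)]
    · exact fun h => (hk (by omega : 0 + q + 1 ≤ p)).trans h₁ |>.not_gt h.2
    · exact fun h => h₂.trans_le (hk (n.le_add_right _)) |>.not_ge h.1

end Bspline

theorem bspline_partition_of_unity_general (n p : ℕ) (k : ℕ → ℝ)
    (hk : ∀ j, k j ≤ k (j + 1)) (s : ℝ) (h1 : k p ≤ s) (h2 : s < k n) :
    ∑ i ∈ Finset.range n, Bspline k p i s = 1 := by
  simpa using sum_range_Bspline_eq_one (monotone_nat_of_le_succ hk) h1 h2 p le_rfl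

theorem bspline_partition_of_unity (n p : ℕ) (hn : 1 ≤ n) (k : ℕ → ℝ)
    (hk : ∀ j, k j ≤ k (j + 1)) (s : ℝ) (h1 : k p ≤ s) (h2 : s < k n) :
    ∑ i ∈ Finset.range n, Bspline k p i s = 1 :=
  bspline_partition_of_unity_general n p k hk s h1 h2
end

section
/- If a knot value is repeated q times the continuity of a degree-p B-spline is reduced to C^{p−q}: let p ∈ ℕ, 1 ≤ q ≤ p, and suppose every real value occurs at most q times among the knots k 0, …, k (n+p) (i.e., for every x ∈ ℝ the set { j ≤ n+p : k j = x } has at most q elements). Then for every i with i + p + 1 ≤ n + p, the B-spline B^{(i,p)} : ℝ → ℝ is (p − q)-times continuously differentiable on all of ℝ. -/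
open Filter Set Topology

/-!
The value of a B-spline at `x` minus its left limit at `x` obeys the Cox–de Boor recursion
itself, since `coxTau` and `coxSigma` are continuous; solving that recursion shows that a degree-`d`
B-spline jumps at `x` only if `d + 1` consecutive knots of its support equal `x`, which a
multiplicity bound `q ≤ d` excludes. Away from the knots, differentiating the recursion gives
`B'_{i,d+1} = (d + 1) (B_{i,d} / (k (i+d+1) - k i) - B_{i+1,d} / (k (i+d+2) - k (i+1)))`; once the
two B-splines of degree `d` are continuous, so is the right-hand side, and the formula extends
across the finitely many knots. Each degree above `q` thus adds one derivative.
-/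

open Filter Set Topology

theorem eventually_nhdsGE_mem_Ico_iff (a b x : ℝ) :
    ∀ᶠ s in 𝓝[≥] x, (s ∈ Ico a b ↔ x ∈ Ico a b) := by
  rcases lt_or_ge x a with ha | ha
  · filter_upwards [Ico_mem_nhdsGE ha] with s hs
    exact iff_of_false (fun h => hs.2.not_ge h.1) (fun h => ha.not_ge h.1)
  rcases lt_or_ge x b with hb | hb
  · filter_upwards [Ico_mem_nhdsGE hb] with s hs
    exact iff_of_true ⟨ha.trans hs.1, hs.2⟩ ⟨ha, hb⟩
  · filter_upwards [self_mem_nhdsWithin] with s (hs : x ≤ s)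
    exact iff_of_false (fun h => (hb.trans hs).not_gt h.2) (fun h => hb.not_gt h.2)

theorem eventually_nhdsLT_mem_Ico_iff (a b x : ℝ) :
    ∀ᶠ s in 𝓝[<] x, (s ∈ Ico a b ↔ x ∈ Ioc a b) := by
  rcases le_or_gt x a with ha | ha
  · filter_upwards [self_mem_nhdsWithin] with s (hs : s < x)
    exact iff_of_false (fun h => (hs.trans_le ha).not_ge h.1) (fun h => ha.not_gt h.1)
  rcases le_or_gt x b with hb | hb
  · filter_upwards [Ioo_mem_nhdsLT ha] with s hs
    exact iff_of_true ⟨hs.1.le, hs.2.trans_le hb⟩ ⟨ha, hb⟩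
  · filter_upwards [Ioo_mem_nhdsLT hb] with s hs
    exact iff_of_false (fun h => lt_asymm h.2 hs.1) (fun h => hb.not_ge h.2)

theorem eventually_nhds_mem_Ico_iff {a b x : ℝ} (ha : a ≠ x) (hb : b ≠ x) :
    ∀ᶠ s in 𝓝 x, (s ∈ Ico a b ↔ x ∈ Ico a b) := by
  have hIoc : x ∈ Ioc a b ↔ x ∈ Ico a b :=
    ⟨fun h => ⟨h.1.le, h.2.lt_of_ne hb.symm⟩, fun h => ⟨h.1.lt_of_ne ha, h.2.le⟩⟩
  rw [← nhdsLT_sup_nhdsGE, eventually_sup]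
  exact ⟨(eventually_nhdsLT_mem_Ico_iff a b x).mono fun s hs => hs.trans hIoc,
    eventually_nhdsGE_mem_Ico_iff a b x⟩

section DerivExtension

variable {E : Type*} [NormedAddCommGroup E] [NormedSpace ℝ E] {f g : ℝ → E}

theorem hasDerivAt_of_eventually_hasDerivAt {x : ℝ}
    (f_diff : ∀ᶠ y in 𝓝[≠] x, HasDerivAt f (g y) y) (hf : ContinuousAt f x)
    (hg : ContinuousAt g x) : HasDerivAt f (g x) x := by
  have hdiff : DifferentiableOn ℝ f {y | HasDerivAt f (g y) y} := fun y hy =>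
    hy.differentiableAt.differentiableWithinAt
  have hderiv : ∀ l ≤ 𝓝[≠] x, Tendsto (deriv f) l (𝓝 (g x)) := fun l hl =>
    (hg.tendsto.mono_left (hl.trans nhdsWithin_le_nhds)).congr'
      (Eventually.filter_mono hl (f_diff.mono fun y hy => hy.deriv.symm))
  have hGT : 𝓝[>] x ≤ 𝓝[≠] x := nhdsWithin_mono _ fun y hy => ne_of_gt hy
  have hLT : 𝓝[<] x ≤ 𝓝[≠] x := nhdsWithin_mono _ fun y hy => ne_of_lt hy
  have hright := hasDerivWithinAt_Ici_of_tendsto_deriv hdiff hf.continuousWithinAt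
    (hGT f_diff) (hderiv _ hGT)
  have hleft := hasDerivWithinAt_Iic_of_tendsto_deriv hdiff hf.continuousWithinAt
    (hLT f_diff) (hderiv _ hLT)
  simpa using hleft.union hright

theorem hasDerivAt_of_hasDerivAt_of_notMem_finite {S : Set ℝ} (hS : S.Finite)
    (f_diff : ∀ y ∉ S, HasDerivAt f (g y) y) (hf : Continuous f) (hg : Continuous g) (x : ℝ) :
    HasDerivAt f (g x) x := by
  refine hasDerivAt_of_eventually_hasDerivAt ?_ hf.continuousAt hg.continuousAt
  have : (S \ {x})ᶜ ∈ 𝓝 x := hS.sdiff.isClosed.compl_mem_nhds fun h => h.2 rfl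
  filter_upwards [nhdsWithin_le_nhds this, self_mem_nhdsWithin] with y hy hyx
  exact f_diff y fun hyS => hy ⟨hyS, hyx⟩

end DerivExtension

theorem knot_ratio_identity {a b F G : ℝ} (hab : a ≤ b) (hbF : b ≤ F) (hFG : F ≤ G) (s : ℝ) :
    ((G - s) / (G - b) - (s - a) / (F - a)) / (F - b) =
      ((F - s) / (F - a) - (s - b) / (G - b)) / (F - b) := by
  rcases hbF.eq_or_lt with rfl | hbF
  · simp
  have : G - b ≠ 0 := by linarith
  have : F - a ≠ 0 := by linarith
  field_simp
  ring

/- The `if` in `coxTau` and `coxSigma` only reproduces Lean's convention `x / 0 = 0`. -/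
theorem coxTau_eq_div (k : ℕ → ℝ) (i q : ℕ) (s : ℝ) :
    coxTau k i q s = (s - k i) / (k (i + q) - k i) := by
  unfold coxTau
  split_ifs with h
  · rfl
  · rw [not_not.1 h, sub_self, div_zero]

theorem coxSigma_eq_div (k : ℕ → ℝ) (i q : ℕ) (s : ℝ) :
    coxSigma k i q s = (k (i + q + 1) - s) / (k (i + q + 1) - k (i + 1)) := by
  unfold coxSigma
  split_ifs with h
  · rfl
  · rw [not_not.1 h, sub_self, div_zero]

theorem hasDerivAt_coxTau (k : ℕ → ℝ) (i q : ℕ) (s : ℝ) :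
    HasDerivAt (coxTau k i q) (1 / (k (i + q) - k i)) s := by
  simp_rw [funext (coxTau_eq_div k i q)]
  simpa using ((hasDerivAt_id s).sub_const (k i)).div_const (k (i + q) - k i)

theorem hasDerivAt_coxSigma (k : ℕ → ℝ) (i q : ℕ) (s : ℝ) :
    HasDerivAt (coxSigma k i q) (-(1 / (k (i + q + 1) - k (i + 1)))) s := by
  simp_rw [funext (coxSigma_eq_div k i q)]
  simpa [neg_div] using ((hasDerivAt_id s).const_sub _).div_const (k (i + q + 1) - k (i + 1))

theorem continuous_coxTau (k : ℕ → ℝ) (i q : ℕ) : Continuous (coxTau k i q) :=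
  continuous_iff_continuousAt.2 fun s => (hasDerivAt_coxTau k i q s).continuousAt

theorem continuous_coxSigma (k : ℕ → ℝ) (i q : ℕ) : Continuous (coxSigma k i q) :=
  continuous_iff_continuousAt.2 fun s => (hasDerivAt_coxSigma k i q s).continuousAt

noncomputable def leftBspline (k : ℕ → ℝ) : ℕ → ℕ → ℝ → ℝ
  | 0, i, s => if s ∈ Ioc (k i) (k (i + 1)) then 1 else 0
  | q + 1, i, s =>
      coxTau k i (q + 1) s * leftBspline k q i s +
      coxSigma k i (q + 1) s * leftBspline k q (i + 1) s

/- For monotone `k`, the first indicator says that the knots `k i, …, k (i + d)` all equal `x`,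
the second that `k (i + 1), …, k (i + d + 1)` do. -/
noncomputable def knotJump (k : ℕ → ℝ) (d i : ℕ) (x : ℝ) : ℝ :=
  (if k i = x ∧ k (i + d) = x ∧ x < k (i + d + 1) then 1 else 0) -
  (if k i < x ∧ k (i + 1) = x ∧ k (i + d + 1) = x then 1 else 0)

/- On the support of each indicator, `coxTau` and `coxSigma` take the value `0` or `1`. -/
theorem knotJump_succ {k : ℕ → ℝ} (hk : Monotone k) (d i : ℕ) (x : ℝ) :
    knotJump k (d + 1) i x =
      coxTau k i (d + 1) x * knotJump k d i x + coxSigma k i (d + 1) x * knotJump k d (i + 1) x := by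
  have h₁ : k i ≤ k (i + 1) := hk (by omega)
  have h₂ : k (i + d + 1) ≤ k (i + d + 2) := hk (by omega)
  have h₃ : k (i + 1) ≤ k (i + d + 1) := hk (by omega)
  simp only [knotJump, coxTau_eq_div, coxSigma_eq_div, show i + (d + 1) = i + d + 1 from rfl,
    show i + 1 + d = i + d + 1 by omega, show i + 1 + 1 = i + 2 from rfl,
    show i + d + 1 + 1 = i + d + 2 from rfl]
  split_ifs <;> grind

noncomputable def BsplineDeriv (k : ℕ → ℝ) : ℕ → ℕ → ℝ → ℝ
  | 0, _, _ => 0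
  | d + 1, i, s => (d + 1) *
      (Bspline k d i s / (k (i + d + 1) - k i) - Bspline k d (i + 1) s / (k (i + d + 2) - k (i + 1)))

theorem BsplineDeriv_succ (k : ℕ → ℝ) (d i : ℕ) (s : ℝ) :
    BsplineDeriv k (d + 1) i s = (d + 1) *
      (Bspline k d i s / (k (i + d + 1) - k i) - Bspline k d (i + 1) s / (k (i + d + 2) - k (i + 1))) :=
  rfl

namespace Bspline

variable {k : ℕ → ℝ}

theorem zero_apply (i : ℕ) (s : ℝ) :
    Bspline k 0 i s = if s ∈ Ico (k i) (k (i + 1)) then 1 else 0 := rfl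

theorem succ_apply (d i : ℕ) (s : ℝ) :
    Bspline k (d + 1) i s =
      coxTau k i (d + 1) s * Bspline k d i s + coxSigma k i (d + 1) s * Bspline k d (i + 1) s :=
  rfl

theorem continuous_succ {d i : ℕ} (h₀ : Continuous (Bspline k d i))
    (h₁ : Continuous (Bspline k d (i + 1))) : Continuous (Bspline k (d + 1) i) :=
  ((continuous_coxTau k i _).mul h₀).add ((continuous_coxSigma k i _).mul h₁)

theorem continuousWithinAt_Ici (d i : ℕ) (x : ℝ) :
    ContinuousWithinAt (Bspline k d i) (Ici x) x := by
  induction d generalizing i with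
  | zero =>
    refine tendsto_const_nhds.congr' ?_
    filter_upwards [eventually_nhdsGE_mem_Ico_iff (k i) (k (i + 1)) x] with s hs
    simp only [zero_apply, hs]
  | succ d ih =>
    exact (((continuous_coxTau k i _).continuousWithinAt).mul (ih i)).add
      (((continuous_coxSigma k i _).continuousWithinAt).mul (ih (i + 1)))

theorem tendsto_nhdsLT (d i : ℕ) (x : ℝ) :
    Tendsto (Bspline k d i) (𝓝[<] x) (𝓝 (leftBspline k d i x)) := by
  induction d generalizing i with
  | zero =>
    refine tendsto_const_nhds.congr' ?_
    filter_upwards [eventually_nhdsLT_mem_Ico_iff (k i) (k (i + 1)) x] with s hs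
    simp only [zero_apply, leftBspline, hs]
  | succ d ih =>
    exact ((((continuous_coxTau k i _).tendsto x).mono_left nhdsWithin_le_nhds).mul (ih i)).add
      ((((continuous_coxSigma k i _).tendsto x).mono_left nhdsWithin_le_nhds).mul (ih (i + 1)))

theorem sub_leftBspline (hk : Monotone k) (d i : ℕ) (x : ℝ) :
    Bspline k d i x - leftBspline k d i x = knotJump k d i x := by
  induction d generalizing i with
  | zero =>
    have := hk (Nat.le_succ i)
    simp only [zero_apply, leftBspline, knotJump, mem_Ico, mem_Ioc, add_zero]
    split_ifs <;> grind
  | succ d ih =>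
    rw [knotJump_succ hk, ← ih, ← ih, succ_apply, leftBspline]
    ring

theorem continuousAt (hk : Monotone k) {d i : ℕ} {x : ℝ}
    (h₀ : ¬(k i = x ∧ k (i + d) = x)) (h₁ : ¬(k (i + 1) = x ∧ k (i + 1 + d) = x)) :
    ContinuousAt (Bspline k d i) x := by
  have hjump : knotJump k d i x = 0 := by
    rw [knotJump, if_neg fun h => h₀ ⟨h.1, h.2.1⟩,
      if_neg fun h => h₁ ⟨h.2.1, add_right_comm i 1 d ▸ h.2.2⟩, sub_zero]
  have hleft : leftBspline k d i x = Bspline k d i x := by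
    linarith [sub_leftBspline hk d i x]
  rw [ContinuousAt, ← nhdsLT_sup_nhdsGE, tendsto_sup]
  exact ⟨hleft ▸ tendsto_nhdsLT d i x, continuousWithinAt_Ici d i x⟩

theorem coxTau_mul_BsplineDeriv_add (hk : Monotone k) (d i : ℕ) (s : ℝ) :
    coxTau k i (d + 1) s * BsplineDeriv k d i s +
        coxSigma k i (d + 1) s * BsplineDeriv k d (i + 1) s =
      d * (Bspline k d i s / (k (i + d + 1) - k i) -
        Bspline k d (i + 1) s / (k (i + d + 2) - k (i + 1))) := by
  cases d with
  | zero => simp [BsplineDeriv]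
  | succ e =>
    simp only [BsplineDeriv_succ, succ_apply, coxTau_eq_div, coxSigma_eq_div,
      show i + (e + 1) = i + e + 1 from rfl, show i + (e + 1 + 1) = i + e + 2 from rfl,
      show i + e + 1 + 1 = i + e + 2 from rfl, show i + 1 + e + 1 = i + e + 2 by omega,
      show i + 1 + e + 2 = i + e + 3 by omega, show i + 1 + (e + 1) = i + e + 2 by omega,
      show i + 1 + 1 = i + 2 from rfl, show i + e + 2 + 1 = i + e + 3 from rfl]
    push_cast
    linear_combination ((e : ℝ) + 1) * Bspline k e (i + 1) s *
      knot_ratio_identity (hk (Nat.le_succ i)) (hk (by omega : i + 1 ≤ i + e + 2))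
        (hk (Nat.le_succ _)) s

theorem hasDerivAt_of_notMem (hk : Monotone k) {d i : ℕ} {s : ℝ}
    (hs : s ∉ k '' Icc i (i + d + 1)) :
    HasDerivAt (Bspline k d i) (BsplineDeriv k d i s) s := by
  induction d generalizing i with
  | zero =>
    have hknot : ∀ j ∈ Icc i (i + 1), k j ≠ s := fun j hj h => hs ⟨j, hj, h⟩
    refine (hasDerivAt_const s (Bspline k 0 i s)).congr_of_eventuallyEq ?_
    filter_upwards [eventually_nhds_mem_Ico_iff (hknot i ⟨le_rfl, by omega⟩)
      (hknot (i + 1) ⟨by omega, le_rfl⟩)] with t ht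
    simp only [zero_apply, ht]
  | succ d ih =>
    have h₀ := ih (i := i) fun h => hs (image_mono (Icc_subset_Icc le_rfl (by omega)) h)
    have h₁ := ih (i := i + 1) fun h => hs (image_mono (Icc_subset_Icc (by omega) (by omega)) h)
    refine (((hasDerivAt_coxTau k i (d + 1) s).mul h₀).add
      ((hasDerivAt_coxSigma k i (d + 1) s).mul h₁)).congr_deriv ?_
    simp only [BsplineDeriv_succ, show i + (d + 1) = i + d + 1 from rfl,
      show i + d + 1 + 1 = i + d + 2 from rfl]
    linear_combination coxTau_mul_BsplineDeriv_add hk d i s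

theorem hasDerivAt (hk : Monotone k) {d i : ℕ} (h₀ : Continuous (Bspline k d i))
    (h₁ : Continuous (Bspline k d (i + 1))) (s : ℝ) :
    HasDerivAt (Bspline k (d + 1) i) (BsplineDeriv k (d + 1) i s) s :=
  hasDerivAt_of_hasDerivAt_of_notMem_finite ((finite_Icc _ _).image k)
    (fun _ ht => hasDerivAt_of_notMem hk ht) (continuous_succ h₀ h₁)
    (continuous_const.mul ((h₀.div_const _).sub (h₁.div_const _))) s

theorem contDiff_succ (hk : Monotone k) {d i : ℕ} {m : ℕ∞} (h₀ : ContDiff ℝ m (Bspline k d i))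
    (h₁ : ContDiff ℝ m (Bspline k d (i + 1))) : ContDiff ℝ (m + 1) (Bspline k (d + 1) i) := by
  have hderiv := hasDerivAt hk h₀.continuous h₁.continuous
  refine contDiff_succ_iff_deriv.2 ⟨fun s => (hderiv s).differentiableAt, by simp, ?_⟩
  rw [funext fun s => (hderiv s).deriv]
  exact contDiff_const.mul ((h₀.div_const _).sub (h₁.div_const _))

theorem continuous_of_card_le (hk : Monotone k) {M q : ℕ}
    (hrep : ∀ x : ℝ, ((Finset.range (M + 1)).filter fun j => k j = x).card ≤ q) {d i : ℕ}
    (hqd : q ≤ d) (hi : i + d + 1 ≤ M) : Continuous (Bspline k d i) := by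
  have hrun : ∀ a, a + d ≤ M → ∀ x, ¬(k a = x ∧ k (a + d) = x) := by
    rintro a ha x ⟨hx₀, hx₁⟩
    have hsub : Finset.Icc a (a + d) ⊆ (Finset.range (M + 1)).filter fun j => k j = x :=
      fun j hj => by
        rw [Finset.mem_Icc] at hj
        exact Finset.mem_filter.2 ⟨Finset.mem_range.2 (by omega),
          le_antisymm (hx₁ ▸ hk hj.2) (hx₀ ▸ hk hj.1)⟩
    have := (Finset.card_le_card hsub).trans (hrep x)
    rw [Nat.card_Icc] at this
    omega
  exact continuous_iff_continuousAt.2 fun x =>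
    continuousAt hk (hrun i (by omega) x) (hrun (i + 1) (by omega) x)

theorem contDiff_of_card_le (hk : Monotone k) {M q : ℕ}
    (hrep : ∀ x : ℝ, ((Finset.range (M + 1)).filter fun j => k j = x).card ≤ q) (m i : ℕ)
    (hi : i + q + m + 1 ≤ M) : ContDiff ℝ (m : ℕ∞) (Bspline k (q + m) i) := by
  induction m generalizing i with
  | zero => exact contDiff_zero.2 (continuous_of_card_le hk hrep le_rfl hi)
  | succ m ih => exact_mod_cast contDiff_succ hk (ih i (by omega)) (ih (i + 1) (by omega))

end Bspline

theorem bspline_continuity_repeated_knots_general (n p q : ℕ) (k : ℕ → ℝ)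
    (hk : ∀ j, k j ≤ k (j + 1)) (hqp : q ≤ p)
    (hrep : ∀ x : ℝ, ((Finset.range (n + p + 1)).filter fun j => k j = x).card ≤ q)
    (i : ℕ) (hi : i + p + 1 ≤ n + p) :
    ContDiff ℝ ((p - q : ℕ) : ℕ∞) (fun s => Bspline k p i s) := by
  obtain ⟨m, rfl⟩ : ∃ m, p = q + m := ⟨p - q, by omega⟩
  rw [Nat.add_sub_cancel_left]
  exact Bspline.contDiff_of_card_le (monotone_nat_of_le_succ hk) hrep m i (by omega)

theorem bspline_continuity_repeated_knots (n p q : ℕ) (k : ℕ → ℝ)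
    (hk : ∀ j, k j ≤ k (j + 1)) (hq1 : 1 ≤ q) (hqp : q ≤ p)
    (hrep : ∀ x : ℝ, ((Finset.range (n + p + 1)).filter fun j => k j = x).card ≤ q)
    (i : ℕ) (hi : i + p + 1 ≤ n + p) :
    ContDiff ℝ ((p - q : ℕ) : ℕ∞) (fun s => Bspline k p i s) :=
  bspline_continuity_repeated_knots_general n p q k hk hqp hrep i hi
end

section
/- The Cauchy stress of the Stokeslet is given by the kernel 𝒯: for every x ∈ ℝ³ with x ≠ 0 and all indices a, c ∈ {1,2,3}, the Newtonian stress σ_{ac}(x) := −p(x) δ_{ac} + η (∂u_a/∂x_c (x) + ∂u_c/∂x_a (x)) of the Stokeslet fields u(x) = (1/(8πη))((x·b) x/|x|³ + b/|x|) and p(x) = (x·b)/(4π|x|³) equals −(3/(4π)) x_a x_c (x·b)/|x|⁵, i.e., σ_{ac}(x) = 𝒯_{acb}(x) b_b with 𝒯_{abc}(x) = −(3/(4π)) x_a x_b x_c/|x|⁵. -/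
open Real

/-- The Stokeslet velocity field `u(x) = (1/(8πη)) ( (x·b) x/|x|³ + b/|x| )`
associated with viscosity `η` and force vector `b`. -/
noncomputable def stokeslet (η : ℝ) (b : EuclideanSpace ℝ (Fin 3))
    (x : EuclideanSpace ℝ (Fin 3)) : EuclideanSpace ℝ (Fin 3) :=
  (1 / (8 * π * η)) • (((inner ℝ x b : ℝ) / ‖x‖ ^ 3) • x + ‖x‖⁻¹ • b)

/-- The Stokeslet pressure field `p(x) = (x·b)/(4π|x|³)`. -/
noncomputable def stokesletPressure (b x : EuclideanSpace ℝ (Fin 3)) : ℝ :=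
  (inner ℝ x b : ℝ) / (4 * π * ‖x‖ ^ 3)

/-!
Write the Stokeslet as `u = (8πη)⁻¹ U` with `U(y) = ((y·b)/|y|³) y + b/|y|`. Its gradient is
`DU(x) = ((x·b)/|x|³) I + x ⊗ (b/|x|³ - 3 (x·b) x/|x|⁵) - (b ⊗ x)/|x|³`, whose antisymmetric
part `(x ⊗ b - b ⊗ x)/|x|³` drops out of `DU + DUᵀ = 2 (x·b)/|x|³ I - 6 (x·b) (x ⊗ x)/|x|⁵`.
Multiplied by `η/(8πη)`, the isotropic term is exactly `p I`, which the pressure cancels.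
-/

open scoped RealInnerProductSpace

section InnerProductSpace

variable {E : Type*} [NormedAddCommGroup E] [InnerProductSpace ℝ E] {x : E}

theorem hasFDerivAt_norm_of_ne_zero (hx : x ≠ 0) :
    HasFDerivAt (fun y : E => ‖y‖) (‖x‖⁻¹ • innerSL ℝ x) x := by
  have h := (hasStrictFDerivAt_norm_sq x).hasFDerivAt.sqrt (by positivity)
  simp only [Real.sqrt_sq (norm_nonneg _)] at h
  convert h using 1
  ext v
  simp only [smul_apply, coe_innerSL_apply, smul_eq_mul, one_div, mul_inv_rev, nsmul_eq_mul,
    Nat.cast_ofNat]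
  field_simp

theorem hasFDerivAt_inv_norm_pow (n : ℕ) (hx : x ≠ 0) :
    HasFDerivAt (fun y : E => (‖y‖ ^ n)⁻¹) ((-n / ‖x‖ ^ (n + 2)) • innerSL ℝ x) x := by
  have hr : ‖x‖ ≠ 0 := norm_ne_zero_iff.mpr hx
  have h := (hasDerivAt_inv (pow_ne_zero n hr)).comp_hasFDerivAt x
    ((hasDerivAt_pow n ‖x‖).comp_hasFDerivAt x (hasFDerivAt_norm_of_ne_zero hx))
  refine h.congr_fderiv ?_
  ext v
  cases n with
  | zero => simp
  | succ n =>
    simp only [smul_apply, innerSL_apply_apply, smul_eq_mul, Nat.cast_succ, Nat.add_sub_cancel]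
    field_simp
    ring

noncomputable def stokesletProfile (b y : E) : E := (⟪y, b⟫ / ‖y‖ ^ 3) • y + ‖y‖⁻¹ • b

theorem hasFDerivAt_stokesletProfile (b : E) (hx : x ≠ 0) :
    HasFDerivAt (stokesletProfile b)
      ((⟪x, b⟫ / ‖x‖ ^ 3) • ContinuousLinearMap.id ℝ E
        + ((‖x‖ ^ 3)⁻¹ • innerSL ℝ b - (3 * ⟪x, b⟫ / ‖x‖ ^ 5) • innerSL ℝ x).smulRight x
        - ((‖x‖ ^ 3)⁻¹ • innerSL ℝ x).smulRight b) x := by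
  have hs : HasFDerivAt (fun y : E => ⟪y, b⟫) (innerSL ℝ b) x :=
    (innerSL ℝ b).hasFDerivAt.congr_of_eventuallyEq (.of_forall fun y => real_inner_comm b y)
  have h := ((hs.mul (hasFDerivAt_inv_norm_pow 3 hx)).smul (hasFDerivAt_id x)).add
    ((hasFDerivAt_inv_norm_pow 1 hx).smul_const b)
  convert h using 1
  · funext y
    simp [stokesletProfile, div_eq_mul_inv]
  · ext v
    simp only [sub_apply, add_apply, smul_apply, ContinuousLinearMap.id_apply,
      ContinuousLinearMap.smulRight_apply, coe_innerSL_apply, smul_eq_mul, Pi.mul_apply,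
      Nat.cast_ofNat, Nat.reduceAdd, id_eq, Nat.cast_one]
    module

theorem inner_fderiv_stokesletProfile_add_swap (b : E) (hx : x ≠ 0) (v w : E) :
    ⟪fderiv ℝ (stokesletProfile b) x v, w⟫ + ⟪fderiv ℝ (stokesletProfile b) x w, v⟫
      = 2 * ⟪x, b⟫ * ⟪v, w⟫ / ‖x‖ ^ 3 - 6 * ⟪x, b⟫ * ⟪x, v⟫ * ⟪x, w⟫ / ‖x‖ ^ 5 := by
  rw [(hasFDerivAt_stokesletProfile b hx).fderiv]
  simp only [add_apply, sub_apply, smul_apply, ContinuousLinearMap.id_apply,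
    ContinuousLinearMap.smulRight_apply, innerSL_apply_apply, inner_add_left, inner_sub_left,
    inner_smul_left, smul_eq_mul, RCLike.conj_to_real]
  rw [real_inner_comm w v, real_inner_comm w x, real_inner_comm w b, real_inner_comm v b]
  ring

end InnerProductSpace

theorem fderiv_stokeslet_component_apply (η : ℝ) (b : EuclideanSpace ℝ (Fin 3))
    {x : EuclideanSpace ℝ (Fin 3)} (hx : x ≠ 0) (a : Fin 3) (v : EuclideanSpace ℝ (Fin 3)) :
    fderiv ℝ (fun y => stokeslet η b y a) x v
      = (1 / (8 * π * η)) * ⟪fderiv ℝ (stokesletProfile b) x v, EuclideanSpace.single a 1⟫ := by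
  have h : HasFDerivAt (fun y => stokeslet η b y a) _ x :=
    (EuclideanSpace.proj (𝕜 := ℝ) a).hasFDerivAt.comp x
      ((hasFDerivAt_stokesletProfile b hx).differentiableAt.hasFDerivAt.const_smul
        (1 / (8 * π * η)))
  rw [h.fderiv]
  simp [EuclideanSpace.inner_single_right]

theorem stokeslet_stress_kernel (η : ℝ) (hη : 0 < η) (b : EuclideanSpace ℝ (Fin 3))
    (x : EuclideanSpace ℝ (Fin 3)) (hx : x ≠ 0) (a c : Fin 3) :
    -(stokesletPressure b x) * (if a = c then 1 else 0) +
      η * (fderiv ℝ (fun y => stokeslet η b y a) x (EuclideanSpace.single c 1) +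
           fderiv ℝ (fun y => stokeslet η b y c) x (EuclideanSpace.single a 1))
      = -(3 / (4 * π)) * (x a * x c * (inner ℝ x b : ℝ) / ‖x‖ ^ 5) := by
  rw [fderiv_stokeslet_component_apply η b hx, fderiv_stokeslet_component_apply η b hx, ← mul_add,
    inner_fderiv_stokesletProfile_add_swap b hx, stokesletPressure]
  simp only [EuclideanSpace.inner_single_right, PiLp.single_apply, RCLike.conj_to_real]
  have hr : ‖x‖ ≠ 0 := norm_ne_zero_iff.mpr hx
  split_ifs <;> field_simp <;> ring
end
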